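/- arXiv:1103.0197 — 4 statements merged into one kernel-verified Lean document; each statement's English description precedes it below -/
import Mathlib

section
/- For all real numbers r, s ∈ (0,π) with r + s ≤ π and every θ ∈ [0,π], one has arccos(cos r·cos s + sin r·sin s·cos θ) ≤ r + s, and equality holds if and only if θ = π. -/
/-!
The argument of `arccos` is the spherical law of cosines: writing `x(θ)` for it,
`x(θ) = cos (r + s) + sin r sin s (1 + cos θ)`, so `x(θ) ≥ cos (r + s)` with equality exactly when
`cos θ = -1`. Since `arccos` is antitone and inverts `cos` on `[0, π]`, this gives
`arccos x(θ) ≤ r + s`, with equality iff `θ = π`.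
-/

open Set Real

section SphericalCosine

variable {r s : ℝ}

theorem cos_add_le_cos_mul_cos_add_sin_mul_sin_mul_cos (hrs : 0 ≤ sin r * sin s) (θ : ℝ) :
    cos (r + s) ≤ cos r * cos s + sin r * sin s * cos θ := by
  rw [cos_add]
  nlinarith [neg_one_le_cos θ]

theorem cos_mul_cos_add_sin_mul_sin_mul_cos_le_cos_sub (hrs : 0 ≤ sin r * sin s) (θ : ℝ) :
    cos r * cos s + sin r * sin s * cos θ ≤ cos (r - s) := by
  rw [cos_sub]
  nlinarith [cos_le_one θ]

theorem cos_mul_cos_add_sin_mul_sin_mul_cos_eq_cos_add_iff (hrs : 0 < sin r * sin s) (θ : ℝ) :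
    cos r * cos s + sin r * sin s * cos θ = cos (r + s) ↔ cos θ = -1 := by
  rw [cos_add, ← sub_eq_zero, ← sub_eq_zero (a := cos θ)]
  constructor
  · intro h
    have : sin r * sin s * (cos θ - -1) = 0 := by linear_combination h
    exact (mul_eq_zero.mp this).resolve_left hrs.ne'
  · intro h
    linear_combination sin r * sin s * h

end SphericalCosine

/-- For `r, s ∈ (0,π)` with `r + s ≤ π` and `θ ∈ [0,π]`,
`arccos(cos r · cos s + sin r · sin s · cos θ) ≤ r + s`, with equality iff `θ = π`. -/
theorem statement8 (r s : ℝ) (hr : r ∈ Ioo (0:ℝ) Real.pi) (hs : s ∈ Ioo (0:ℝ) Real.pi)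
    (hrs : r + s ≤ Real.pi) (θ : ℝ) (hθ : θ ∈ Icc (0:ℝ) Real.pi) :
    Real.arccos (Real.cos r * Real.cos s + Real.sin r * Real.sin s * Real.cos θ) ≤ r + s ∧
    (Real.arccos (Real.cos r * Real.cos s + Real.sin r * Real.sin s * Real.cos θ) = r + s ↔
      θ = Real.pi) := by
  have hsin : 0 < sin r * sin s :=
    mul_pos (sin_pos_of_pos_of_lt_pi hr.1 hr.2) (sin_pos_of_pos_of_lt_pi hs.1 hs.2)
  have hlow := cos_add_le_cos_mul_cos_add_sin_mul_sin_mul_cos hsin.le θ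
  have hhigh := cos_mul_cos_add_sin_mul_sin_mul_cos_le_cos_sub hsin.le θ
  have harccos : arccos (cos (r + s)) = r + s := arccos_cos (by linarith [hr.1, hs.1]) hrs
  refine ⟨harccos ▸ arccos_le_arccos hlow, ?_⟩
  calc arccos (cos r * cos s + sin r * sin s * cos θ) = r + s
      ↔ cos r * cos s + sin r * sin s * cos θ = cos (r + s) := by
        nth_rw 1 [← harccos]
        exact arccos_inj ((neg_one_le_cos _).trans hlow) (hhigh.trans (cos_le_one _))
          (neg_one_le_cos _) (cos_le_one _)
    _ ↔ cos θ = cos π := by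
        rw [cos_mul_cos_add_sin_mul_sin_mul_cos_eq_cos_add_iff hsin, cos_pi]
    _ ↔ θ = π := injOn_cos.eq_iff hθ ⟨pi_pos.le, le_rfl⟩
end

section
/- Let c > 0, r ∈ (0,π), t ∈ ℝ and A ≥ 0, and define h(s) := −c·log( sin( arccos( cos(r + s·t)·cos(s·A·sin r) ) ) ) for s in a neighborhood of 0 (note the arccos argument equals cos r at s = 0, so h is well defined near 0). Then h is twice differentiable at 0 and h''(0) − (1/c)·h'(0)² = c·( t² − A²·cos²r ). -/
/-!
Since `sin (arccos x) = √(1 - x²)`, the function is `h = -(c/2) log (1 - F²)` with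
`F s = cos (r + s t) cos (s A sin r)`, so `h' = c F F' / (1 - F²)` and `h''` follows from the
quotient rule. At `s = 0` we have `F = cos r`, `F' = -t sin r`, `F'' = -(t² + A² sin² r) cos r`,
and the identity reduces to `1 - cos² r = sin² r`.
-/

open Filter Set Real

theorem Real.hasDerivAt_log_sin_arccos {x : ℝ} (hx : x ^ 2 < 1) :
    HasDerivAt (fun y => log (sin (arccos y))) (-x / (1 - x ^ 2)) x := by
  have hx₁ : -1 < x := by nlinarith
  have hx₂ : x < 1 := by nlinarith
  have hpos : 0 < 1 - x ^ 2 := by linarith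
  have hsin : sin (arccos x) = √(1 - x ^ 2) := sin_arccos x
  have hsin_ne : sin (arccos x) ≠ 0 := by rw [hsin]; positivity
  convert ((hasDerivAt_arccos hx₁.ne' hx₂.ne).sin).log hsin_ne using 1
  rw [cos_arccos hx₁.le hx₂.le, hsin]
  field_simp
  rw [sq_sqrt hpos.le]

theorem hasDerivAt_neg_mul_log_sin_arccos {f : ℝ → ℝ} {f' x : ℝ} (c : ℝ)
    (hf : HasDerivAt f f' x) (hx : f x ^ 2 < 1) :
    HasDerivAt (fun y => -c * log (sin (arccos (f y)))) (c * (f x * f' / (1 - f x ^ 2))) x :=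
  (((hasDerivAt_log_sin_arccos hx).comp x hf).const_mul (-c)).congr_deriv (by ring)

theorem HasDerivAt.mul_div_one_sub_sq {f f' : ℝ → ℝ} {f'' x : ℝ} (hf : HasDerivAt f (f' x) x)
    (hf' : HasDerivAt f' f'' x) (hx : f x ^ 2 ≠ 1) :
    HasDerivAt (fun y => f y * f' y / (1 - f y ^ 2))
      (((f' x ^ 2 + f x * f'') * (1 - f x ^ 2) + 2 * f x ^ 2 * f' x ^ 2) / (1 - f x ^ 2) ^ 2) x := by
  refine ((hf.fun_mul hf').fun_div ((hf.fun_pow 2).const_sub 1)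
    (sub_ne_zero.2 hx.symm)).congr_deriv ?_
  push_cast
  ring

theorem hasDerivAt_cos_mul_cos (a b d s : ℝ) :
    HasDerivAt (fun s => cos (a + s * b) * cos (s * d))
      (-(b * (sin (a + s * b) * cos (s * d))) - d * (cos (a + s * b) * sin (s * d))) s := by
  have h₁ := ((hasDerivAt_mul_const (x := s) b).const_add a).cos
  have h₂ := (hasDerivAt_mul_const (x := s) d).cos
  exact (h₁.fun_mul h₂).congr_deriv (by ring)

theorem hasDerivAt_deriv_cos_mul_cos_zero (a b d : ℝ) :
    HasDerivAt
      (fun s => -(b * (sin (a + s * b) * cos (s * d))) - d * (cos (a + s * b) * sin (s * d)))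
      (-(b ^ 2 + d ^ 2) * cos a) 0 := by
  have h₁ := ((hasDerivAt_mul_const (x := 0) b).const_add a).cos
  have h₂ := (hasDerivAt_mul_const (x := 0) d).cos
  have h₃ := ((hasDerivAt_mul_const (x := 0) b).const_add a).sin
  have h₄ := (hasDerivAt_mul_const (x := 0) d).sin
  refine (((h₃.fun_mul h₂).const_mul b).fun_neg.fun_sub
    ((h₁.fun_mul h₄).const_mul d)).congr_deriv ?_
  simp
  ring

theorem mul_sub_one_div_mul_mul_sq (c x y : ℝ) :
    c * y - 1 / c * (c * x) ^ 2 = c * (y - x ^ 2) := by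
  rcases eq_or_ne c 0 with rfl | hc
  · simp
  · field_simp

theorem statement12_general (c r t A : ℝ) (hr : r ∈ Ioo (0:ℝ) Real.pi) :
    ∃ (h' : ℝ → ℝ) (h'' : ℝ),
      (∀ᶠ s in nhds (0:ℝ), HasDerivAt
        (fun s : ℝ => -c * Real.log (Real.sin
          (Real.arccos (Real.cos (r + s*t) * Real.cos (s * A * Real.sin r))))) (h' s) s) ∧
      HasDerivAt h' h'' 0 ∧
      h'' - (1/c) * (h' 0)^2 = c * (t^2 - A^2 * Real.cos r ^ 2) := by
  have hsin : 0 < sin r := sin_pos_of_pos_of_lt_pi hr.1 hr.2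
  simp_rw [mul_assoc _ A]
  set F := fun s => cos (r + s * t) * cos (s * (A * sin r))
  set F' := fun s => -(t * (sin (r + s * t) * cos (s * (A * sin r))))
    - A * sin r * (cos (r + s * t) * sin (s * (A * sin r)))
  have hF : ∀ s, HasDerivAt F (F' s) s := hasDerivAt_cos_mul_cos r t (A * sin r)
  have hF' := hasDerivAt_deriv_cos_mul_cos_zero r t (A * sin r)
  have hF0 : F 0 = cos r := by simp [F]
  have hF'0 : F' 0 = -(t * sin r) := by simp [F']
  have hF0_sq : F 0 ^ 2 < 1 := by
    rw [hF0, cos_sq']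
    linarith [pow_pos hsin 2]
  have hnear : ∀ᶠ s in nhds 0, F s ^ 2 < 1 :=
    ((hF 0).continuousAt.pow 2).eventually_lt continuousAt_const hF0_sq
  refine ⟨fun s => c * (F s * F' s / (1 - F s ^ 2)), _,
    hnear.mono fun s hs => hasDerivAt_neg_mul_log_sin_arccos c (hF s) hs,
    ((hF 0).mul_div_one_sub_sq hF' hF0_sq.ne).const_mul c, ?_⟩
  rw [mul_sub_one_div_mul_mul_sq, hF0, hF'0, ← sin_sq]
  field_simp
  ring

/-- Radial-weight computation for the punctured spherical cone:
for `c > 0`, `r ∈ (0,π)`, `t ∈ ℝ`, `A ≥ 0`, the function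
`h(s) = -c·log(sin(arccos(cos(r+st)·cos(s·A·sin r))))` is twice differentiable at `0` and
`h''(0) - (1/c)·h'(0)² = c·(t² - A²·cos²r)`. -/
theorem statement12 (c r t A : ℝ) (hc : 0 < c) (hr : r ∈ Ioo (0:ℝ) Real.pi) (hA : 0 ≤ A) :
    ∃ (h' : ℝ → ℝ) (h'' : ℝ),
      (∀ᶠ s in nhds (0:ℝ), HasDerivAt
        (fun s : ℝ => -c * Real.log (Real.sin
          (Real.arccos (Real.cos (r + s*t) * Real.cos (s * A * Real.sin r))))) (h' s) s) ∧
      HasDerivAt h' h'' 0 ∧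
      h'' - (1/c) * (h' 0)^2 = c * (t^2 - A^2 * Real.cos r ^ 2) :=
  statement12_general c r t A hr
end

section
/- For κ ≠ 0 define C_κ(r) := cos(√κ·r) and S_κ(r) := sin(√κ·r)/√κ if κ > 0, and C_κ(r) := cosh(√(−κ)·r) and S_κ(r) := sinh(√(−κ)·r)/√(−κ) if κ < 0, and let C_κ^{−1} denote the inverse of C_κ (i.e. C_κ^{−1}(u) = arccos(u)/√κ for κ > 0 and C_κ^{−1}(u) = arccosh(u)/√(−κ) for κ < 0). Then for all fixed s, t ≥ 0 and θ ∈ [0,π], lim_{κ → 0, κ ≠ 0} C_κ^{−1}( C_κ(s)·C_κ(t) + κ·S_κ(s)·S_κ(t)·cos θ ) = sqrt( s² + t² − 2st·cos θ ). -/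
open Filter Set

noncomputable section

/-- `C_κ`. -/
def Ck (κ r : ℝ) : ℝ :=
  if 0 < κ then Real.cos (Real.sqrt κ * r) else Real.cosh (Real.sqrt (-κ) * r)

/-- `S_κ`. -/
def Sk (κ r : ℝ) : ℝ :=
  if 0 < κ then Real.sin (Real.sqrt κ * r) / Real.sqrt κ
  else Real.sinh (Real.sqrt (-κ) * r) / Real.sqrt (-κ)

/-- The inverse hyperbolic cosine `arcosh(u) = log(u + sqrt(u² - 1))`. -/
def arcosh (u : ℝ) : ℝ := Real.log (u + Real.sqrt (u^2 - 1))

/-- `C_κ⁻¹`, the inverse of `C_κ`. -/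
def CkInv (κ u : ℝ) : ℝ :=
  if 0 < κ then Real.arccos u / Real.sqrt κ else arcosh u / Real.sqrt (-κ)

/-!
Put `r = √|κ|` and `c = cos θ`. By the addition formulas the argument of `C_κ⁻¹` is the convex
combination `(1 + c)/2 · cos ((s - t) r) + (1 - c)/2 · cos ((s + t) r)` for `κ > 0`, and the same
with `cosh` for `κ < 0`. The half-angle formula then says that the angle `φ` it determines satisfies
`sin² (φ/2) = (1 + c)/2 · sin² ((s - t) r/2) + (1 - c)/2 · sin² ((s + t) r/2)` (resp. with `sinh`).
As `r → 0` also `φ → 0`, and since `sin` and `sinh` are asymptotic to the identity at `0`,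
dividing by `(r/2)²` gives `(φ/r)² → (1 + c)/2 · (s - t)² + (1 - c)/2 · (s + t)² = s² + t² - 2st c`.
-/

open Real Topology Asymptotics

theorem tendsto_comp_div_iff_of_isEquivalent {ι : Type*} {l : Filter ι} {f : ℝ → ℝ}
    (hf : f ~[𝓝 0] id) {φ ψ : ι → ℝ} (hφ : Tendsto φ l (𝓝 0)) {L : ℝ} :
    Tendsto (fun x ↦ f (φ x) / ψ x) l (𝓝 L) ↔ Tendsto (fun x ↦ φ x / ψ x) l (𝓝 L) :=
  ((hf.comp_tendsto hφ).div IsEquivalent.refl).tendsto_nhds_iff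

theorem tendsto_comp_mul_half_div_half_of_isEquivalent {f : ℝ → ℝ} (hf : f ~[𝓝 0] id)
    (a : ℝ) : Tendsto (fun r ↦ f (a * r / 2) / (r / 2)) (𝓝[≠] 0) (𝓝 a) := by
  have hφ : Tendsto (fun r : ℝ ↦ a * r / 2) (𝓝[≠] 0) (𝓝 0) := by
    simpa using ((continuous_const.mul continuous_id).div_const 2).tendsto (0 : ℝ)
      |>.mono_left nhdsWithin_le_nhds
  refine (tendsto_comp_div_iff_of_isEquivalent hf hφ).2 (tendsto_const_nhds.congr' ?_)
  filter_upwards [self_mem_nhdsWithin] with r (hr : r ≠ 0)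
  field_simp

theorem tendsto_div_of_sq_half_eq {f : ℝ → ℝ} (hf : f ~[𝓝 0] id) {α β a b : ℝ}
    {φ : ℝ → ℝ} (hφ : Tendsto φ (𝓝[>] 0) (𝓝 0))
    (hf_nonneg : ∀ r > 0, 0 ≤ f (φ r / 2))
    (hf_sq : ∀ r > 0, f (φ r / 2) ^ 2 = α * f (a * r / 2) ^ 2 + β * f (b * r / 2) ^ 2) :
    Tendsto (fun r ↦ φ r / r) (𝓝[>] 0) (𝓝 √(α * a ^ 2 + β * b ^ 2)) := by
  have hlim (x : ℝ) : Tendsto (fun r ↦ f (x * r / 2) / (r / 2)) (𝓝[>] 0) (𝓝 x) :=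
    (tendsto_comp_mul_half_div_half_of_isEquivalent hf x).mono_left
      (nhdsWithin_mono _ fun _ hr ↦ ne_of_gt hr)
  have hhalf : Tendsto (fun r ↦ f (φ r / 2) / (r / 2)) (𝓝[>] 0)
      (𝓝 √(α * a ^ 2 + β * b ^ 2)) := by
    refine ((((hlim a).pow 2).const_mul α).add (((hlim b).pow 2).const_mul β)).sqrt.congr' ?_
    filter_upwards [self_mem_nhdsWithin] with r (hr : 0 < r)
    have hq : 0 ≤ f (φ r / 2) / (r / 2) := div_nonneg (hf_nonneg r hr) (by positivity)
    rw [← Real.sqrt_sq hq, div_pow (f (φ r / 2)), hf_sq r hr]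
    ring_nf
  have hφ_half : Tendsto (fun r ↦ φ r / 2) (𝓝[>] 0) (𝓝 0) := by simpa using hφ.div_const 2
  simpa [div_div_div_cancel_right₀] using
    (tendsto_comp_div_iff_of_isEquivalent hf hφ_half).1 hhalf

theorem sq_add_sq_sub_two_mul_mul_eq (s t c : ℝ) :
    s ^ 2 + t ^ 2 - 2 * s * t * c = (1 + c) / 2 * (s - t) ^ 2 + (1 - c) / 2 * (s + t) ^ 2 := by
  ring

theorem cos_mul_cos_add_sin_mul_sin_mul (x y c : ℝ) :
    cos x * cos y + sin x * sin y * c =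
      (1 + c) / 2 * cos (x - y) + (1 - c) / 2 * cos (x + y) := by
  rw [cos_sub, cos_add]
  ring

theorem cosh_mul_cosh_sub_sinh_mul_sinh_mul (x y c : ℝ) :
    cosh x * cosh y - sinh x * sinh y * c =
      (1 + c) / 2 * cosh (x - y) + (1 - c) / 2 * cosh (x + y) := by
  rw [cosh_sub, cosh_add]
  ring

theorem sin_half_sq (x : ℝ) : sin (x / 2) ^ 2 = (1 - cos x) / 2 := by
  rw [sin_sq_eq_half_sub, mul_div_cancel₀ x two_ne_zero]
  ring

theorem sinh_half_sq (x : ℝ) : sinh (x / 2) ^ 2 = (cosh x - 1) / 2 := by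
  have := cosh_two_mul (x / 2)
  rw [mul_div_cancel₀ x two_ne_zero, cosh_sq] at this
  linarith

theorem tendsto_arccos_cone_div {s t c : ℝ} (hc : c ∈ Icc (-1 : ℝ) 1) :
    Tendsto (fun r ↦ arccos (cos (r * s) * cos (r * t) + sin (r * s) * sin (r * t) * c) / r)
      (𝓝[>] 0) (𝓝 √(s ^ 2 + t ^ 2 - 2 * s * t * c)) := by
  set u : ℝ → ℝ := fun r ↦ (1 + c) / 2 * cos ((s - t) * r) + (1 - c) / 2 * cos ((s + t) * r)
  have hu (r : ℝ) : cos (r * s) * cos (r * t) + sin (r * s) * sin (r * t) * c = u r := by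
    rw [cos_mul_cos_add_sin_mul_sin_mul, ← mul_sub, ← mul_add, mul_comm r, mul_comm r]
  have hu_mem (r : ℝ) : u r ∈ Icc (-1 : ℝ) 1 := by
    obtain ⟨hc₁, hc₂⟩ := hc
    simp only [u]
    constructor <;> nlinarith [neg_one_le_cos ((s - t) * r), cos_le_one ((s - t) * r),
      neg_one_le_cos ((s + t) * r), cos_le_one ((s + t) * r)]
  simp_rw [hu, sq_add_sq_sub_two_mul_mul_eq]
  refine tendsto_div_of_sq_half_eq isEquivalent_sin ?_ (fun r _ ↦ ?_) (fun r _ ↦ ?_)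
  · have hu_lim : Tendsto u (𝓝[>] 0) (𝓝 1) := by
      have hu₀ : u 0 = 1 := by simp only [u]; ring_nf; simp
      rw [← hu₀]
      exact ((by fun_prop : Continuous u).tendsto 0).mono_left nhdsWithin_le_nhds
    have h := (continuous_arccos.tendsto 1).comp hu_lim
    rwa [arccos_one] at h
  · exact sin_nonneg_of_nonneg_of_le_pi (by linarith [arccos_nonneg (u r)])
      (by linarith [arccos_le_pi (u r), pi_pos])
  · rw [sin_half_sq, sin_half_sq, sin_half_sq, cos_arccos (hu_mem r).1 (hu_mem r).2]
    ring

theorem tendsto_arcosh_cone_div {s t c : ℝ} (hc : c ∈ Icc (-1 : ℝ) 1) :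
    Tendsto (fun r ↦
        Real.arcosh (cosh (r * s) * cosh (r * t) - sinh (r * s) * sinh (r * t) * c) / r)
      (𝓝[>] 0) (𝓝 √(s ^ 2 + t ^ 2 - 2 * s * t * c)) := by
  set u : ℝ → ℝ := fun r ↦ (1 + c) / 2 * cosh ((s - t) * r) + (1 - c) / 2 * cosh ((s + t) * r)
  have hu (r : ℝ) : cosh (r * s) * cosh (r * t) - sinh (r * s) * sinh (r * t) * c = u r := by
    rw [cosh_mul_cosh_sub_sinh_mul_sinh_mul, ← mul_sub, ← mul_add, mul_comm r, mul_comm r]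
  have hu_ge (r : ℝ) : 1 ≤ u r := by
    obtain ⟨hc₁, hc₂⟩ := hc
    simp only [u]
    nlinarith [one_le_cosh ((s - t) * r), one_le_cosh ((s + t) * r)]
  simp_rw [hu, sq_add_sq_sub_two_mul_mul_eq]
  refine tendsto_div_of_sq_half_eq isEquivalent_sinh ?_ (fun r _ ↦ ?_) (fun r _ ↦ ?_)
  · have hu_lim : Tendsto u (𝓝[>] 0) (𝓝[Ici 1] 1) := by
      have hu₀ : u 0 = 1 := by simp only [u]; ring_nf; simp
      refine tendsto_nhdsWithin_iff.2 ⟨?_, Eventually.of_forall hu_ge⟩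
      rw [← hu₀]
      exact ((by fun_prop : Continuous u).tendsto 0).mono_left nhdsWithin_le_nhds
    have h := (continuousOn_arcosh.continuousWithinAt self_mem_Ici).tendsto.comp hu_lim
    rwa [arcosh_zero] at h
  · exact sinh_nonneg_iff.2 (by linarith [arcosh_nonneg (hu_ge r)])
  · rw [sinh_half_sq, sinh_half_sq, sinh_half_sq, cosh_arcosh (hu_ge r)]
    ring

theorem CkInv_cone_of_pos {κ : ℝ} (hκ : 0 < κ) (s t c : ℝ) :
    CkInv κ (Ck κ s * Ck κ t + κ * Sk κ s * Sk κ t * c) =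
      arccos (cos (√κ * s) * cos (√κ * t) + sin (√κ * s) * sin (√κ * t) * c) / √κ := by
  have hκ' : √κ ≠ 0 := (sqrt_pos.2 hκ).ne'
  simp only [Ck, Sk, CkInv, if_pos hκ]
  congr 3
  field_simp
  rw [sq_sqrt hκ.le]

theorem CkInv_cone_of_neg {κ : ℝ} (hκ : κ < 0) (s t c : ℝ) :
    CkInv κ (Ck κ s * Ck κ t + κ * Sk κ s * Sk κ t * c) =
      Real.arcosh (cosh (√(-κ) * s) * cosh (√(-κ) * t)
        - sinh (√(-κ) * s) * sinh (√(-κ) * t) * c) / √(-κ) := by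
  have hκ' : √(-κ) ≠ 0 := (sqrt_pos.2 (neg_pos.2 hκ)).ne'
  simp only [Ck, Sk, CkInv, if_neg hκ.not_gt]
  congr 3
  field_simp
  rw [sq_sqrt (neg_nonneg.2 hκ.le)]
  ring

theorem tendsto_sqrt_nhdsGT_zero : Tendsto (√·) (𝓝[>] (0 : ℝ)) (𝓝[>] 0) := by
  refine tendsto_nhdsWithin_iff.2 ⟨?_, ?_⟩
  · simpa using (continuous_sqrt.tendsto 0).mono_left nhdsWithin_le_nhds
  · filter_upwards [self_mem_nhdsWithin] with x hx using sqrt_pos.2 hx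

theorem statement13_general (s t : ℝ) (θ : ℝ) :
    Tendsto (fun κ : ℝ => CkInv κ (Ck κ s * Ck κ t + κ * Sk κ s * Sk κ t * Real.cos θ))
      (nhdsWithin (0:ℝ) {(0:ℝ)}ᶜ)
      (nhds (Real.sqrt (s^2 + t^2 - 2*s*t*Real.cos θ))) := by
  have hc : cos θ ∈ Icc (-1 : ℝ) 1 := ⟨neg_one_le_cos θ, cos_le_one θ⟩
  rw [← nhdsLT_sup_nhdsGT, tendsto_sup]
  constructor
  · have hr : Tendsto (fun κ : ℝ ↦ √(-κ)) (𝓝[<] 0) (𝓝[>] 0) := by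
      have hneg : Tendsto Neg.neg (𝓝[<] (0 : ℝ)) (𝓝[>] 0) := by
        simpa using tendsto_neg_nhdsLT (a := (0 : ℝ))
      exact tendsto_sqrt_nhdsGT_zero.comp hneg
    refine ((tendsto_arcosh_cone_div hc).comp hr).congr' ?_
    filter_upwards [self_mem_nhdsWithin] with κ hκ
    exact (CkInv_cone_of_neg hκ s t _).symm
  · refine ((tendsto_arccos_cone_div hc).comp tendsto_sqrt_nhdsGT_zero).congr' ?_
    filter_upwards [self_mem_nhdsWithin] with κ hκ
    exact (CkInv_cone_of_pos hκ s t _).symm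

/-- For fixed `s, t ≥ 0` and `θ ∈ [0,π]`, the `(κ,N)`-cone distance
formula converges, as `κ → 0` (κ ≠ 0), to the Euclidean cone distance
`sqrt(s² + t² - 2st·cos θ)`. -/
theorem statement13 (s t : ℝ) (hs : 0 ≤ s) (ht : 0 ≤ t) (θ : ℝ) (hθ : θ ∈ Icc (0:ℝ) Real.pi) :
    Tendsto (fun κ : ℝ => CkInv κ (Ck κ s * Ck κ t + κ * Sk κ s * Sk κ t * Real.cos θ))
      (nhdsWithin (0:ℝ) {(0:ℝ)}ᶜ)
      (nhds (Real.sqrt (s^2 + t^2 - 2*s*t*Real.cos θ))) :=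
  statement13_general s t θ
end
end

section
/- Let (M,d,m) be a metric measure space satisfying the curvature-dimension condition CD(K,N) for some K ∈ ℝ and N ∈ [1,∞). Then the measure m has no atoms, i.e. m({x}) = 0 for every x ∈ M. -/
open MeasureTheory Set Filter
open scoped ENNReal NNReal

noncomputable section

namespace PaperCD

variable {X : Type*}

/-- A (constant-speed, defined on `[0,1]`) geodesic with respect to a distance function `ρ`. -/
def IsGeodesicWrt (ρ : X → X → ℝ) (γ : ℝ → X) : Prop :=
  ∀ s ∈ Icc (0:ℝ) 1, ∀ t ∈ Icc (0:ℝ) 1, ρ (γ s) (γ t) = |s - t| * ρ (γ 0) (γ 1)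

/-- `q` is a coupling of the probability measures `μ₀` and `μ₁`. -/
def IsCoupling [MeasurableSpace X] (q : Measure (X × X)) (μ₀ μ₁ : Measure X) : Prop :=
  IsProbabilityMeasure q ∧ q.map Prod.fst = μ₀ ∧ q.map Prod.snd = μ₁

/-- Quadratic transport cost of a coupling w.r.t. the distance `ρ`. -/
def cost (ρ : X → X → ℝ) [MeasurableSpace X] (q : Measure (X × X)) : ℝ≥0∞ :=
  ∫⁻ p, ENNReal.ofReal (ρ p.1 p.2 ^ 2) ∂q

/-- The squared L²-Wasserstein distance w.r.t. the distance `ρ`. -/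
def W2sq (ρ : X → X → ℝ) [MeasurableSpace X] (μ₀ μ₁ : Measure X) : ℝ≥0∞ :=
  ⨅ (q : Measure (X × X)) (_ : IsCoupling q μ₀ μ₁), cost ρ q

/-- `q` is an optimal coupling of `μ₀` and `μ₁`. -/
def IsOptimalCoupling (ρ : X → X → ℝ) [MeasurableSpace X]
    (q : Measure (X × X)) (μ₀ μ₁ : Measure X) : Prop :=
  IsCoupling q μ₀ μ₁ ∧ cost ρ q = W2sq ρ μ₀ μ₁

/-- An optimal path measure (dynamical optimal transference plan): a probability measure on
curves which is concentrated on geodesics and whose joint endpoint distribution is an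
optimal coupling of its two endpoint distributions. -/
def IsOptimalPathMeasure (ρ : X → X → ℝ) [MeasurableSpace X] (ν : Measure (ℝ → X)) : Prop :=
  IsProbabilityMeasure ν ∧ ν {γ | ¬ IsGeodesicWrt ρ γ} = 0 ∧
  IsOptimalCoupling ρ (ν.map fun γ => (γ 0, γ 1)) (ν.map fun γ => γ 0) (ν.map fun γ => γ 1)

/-- Support of a measure w.r.t. a distance function: points all of whose `ρ`-balls have
positive measure. -/
def suppWrt {Y : Type*} [MeasurableSpace Y] (ρ : Y → Y → ℝ) (μ : Measure Y) : Set Y :=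
  {y | ∀ ε > 0, 0 < μ {z | ρ y z < ε}}

/-- Uniform distance on paths (over the parameter interval `[0,1]`). -/
def pathDist (ρ : X → X → ℝ) (γ γ' : ℝ → X) : ℝ :=
  ⨆ t : Icc (0:ℝ) 1, ρ (γ t.1) (γ' t.1)

/-- The volume distortion coefficients `τ_{K,N}^{(t)}(θ)`. -/
def tau (K N t θ : ℝ) : ℝ≥0∞ :=
  if K = 0 ∨ θ = 0 then ENNReal.ofReal t
  else if 0 < K then
    if N = 1 then ∞
    else if θ < Real.sqrt ((N-1)/K) * Real.pi then
      ENNReal.ofReal (t ^ (1/N) *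
        (Real.sin (Real.sqrt (K/(N-1)) * (t*θ)) / Real.sin (Real.sqrt (K/(N-1)) * θ)) ^ (1 - 1/N))
    else ∞
  else
    ENNReal.ofReal (t ^ (1/N) *
      (Real.sinh (Real.sqrt (-K/(N-1)) * (t*θ)) / Real.sinh (Real.sqrt (-K/(N-1)) * θ)) ^ (1 - 1/N))

/-- Membership in `P₂(X,ρ,m)`: an `m`-absolutely continuous probability measure with finite
second moment. -/
def memP2 (ρ : X → X → ℝ) [MeasurableSpace X] (m μ : Measure X) : Prop :=
  IsProbabilityMeasure μ ∧ μ ≪ m ∧ ∃ x₀, ∫⁻ x, ENNReal.ofReal (ρ x₀ x ^ 2) ∂μ < ∞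

/-- The curvature-dimension condition `CD(K,N)` of Sturm / Lott–Villani for the metric measure
space `(X,ρ,m)`: for every pair of absolutely continuous probability measures `μᵢ = fᵢ·m` in
`P₂` there are an optimal coupling `q` and a Wasserstein geodesic `t ↦ (f t)·m` in `P₂`
joining them along which the Rényi entropy inequality with coefficients `τ_{K,N'}` holds. -/
def CD (ρ : X → X → ℝ) [MeasurableSpace X] (m : Measure X) (K N : ℝ) : Prop :=
  ∀ f₀ f₁ : X → ℝ≥0∞,
    memP2 ρ m (m.withDensity f₀) → memP2 ρ m (m.withDensity f₁) →
    ∃ (q : Measure (X × X)) (f : ℝ → X → ℝ≥0∞),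
      IsOptimalCoupling ρ q (m.withDensity f₀) (m.withDensity f₁) ∧
      f 0 = f₀ ∧ f 1 = f₁ ∧
      (∀ t ∈ Icc (0:ℝ) 1, memP2 ρ m (m.withDensity (f t))) ∧
      (∀ s ∈ Icc (0:ℝ) 1, ∀ t ∈ Icc (0:ℝ) 1,
        W2sq ρ (m.withDensity (f s)) (m.withDensity (f t)) =
          ENNReal.ofReal ((s - t)^2) * W2sq ρ (m.withDensity f₀) (m.withDensity f₁)) ∧
      (∀ t ∈ Ioo (0:ℝ) 1, ∀ N', N ≤ N' →
        (∫⁻ p, tau K N' (1-t) (ρ p.1 p.2) * (f₀ p.1) ^ (-(1/N')) +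
               tau K N' t (ρ p.1 p.2) * (f₁ p.2) ^ (-(1/N')) ∂q)
          ≤ ∫⁻ x, (f t x) ^ (1 - 1/N') ∂m)

/-- `ρ²`-cyclic monotonicity of a set `Ξ ⊆ X × X`. -/
def CyclicallyMonotone (ρ : X → X → ℝ) (Ξ : Set (X × X)) : Prop :=
  ∀ (k : ℕ) (x y : Fin (k+1) → X), (∀ i, (x i, y i) ∈ Ξ) →
    ∑ i, ρ (x i) (y i) ^ 2 ≤ ∑ i, ρ (x i) (y (i + 1)) ^ 2

/-!
Suppose `m {x} > 0`. Apply `CD(K, N)` to the normalized restrictions `μ₀` of `m` to `{x}` and `μ₁`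
of `m` to a small ball on which `R₁ ≤ dist x · ≤ R₂`, where `R₁ > 0`. Since `μ₀` is a Dirac mass,
`W₂²(μ₀, μₜ) = t² W₂²(μ₀, μ₁)` and `W₂²(μₜ, μ₁) = (1 - t)² W₂²(μ₀, μ₁)` leave no room in the
inequality `|dist x z - dist x w| ≤ dist z w`: averaged over couplings of `μₜ` and `μ₁`, this
forces `dist x z = t · dist x w`, so `μₜ` lives on the annulus `t R₁ ≤ dist x · ≤ t R₂`. For
`t ≤ 1/2` the `τ` coefficients are bounded below, so the Rényi entropy inequality bounds
`c · m {x} ^ (1 / N')` by `∫ (f t) ^ (1 - 1 / N') dm`, which by Hölder is at most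
`m(annulus) ^ (1 / N')`. Thus punctured balls around `x` of every small radius carry a fixed
positive mass, although they decrease to the empty set.
-/

open Topology

section Lintegral

variable {α : Type*} [MeasurableSpace α]

lemma lintegral_rpow_le_lintegral_rpow_mul_measure_univ (μ : Measure α) (f : α → ℝ≥0∞) {a : ℝ}
    (ha₀ : 0 < a) (ha₁ : a < 1) :
    ∫⁻ z, f z ^ a ∂μ ≤ (∫⁻ z, f z ∂μ) ^ a * μ univ ^ (1 - a) := by
  obtain ⟨g, hg, hgf, hfg⟩ := exists_measurable_le_lintegral_eq μ fun z => f z ^ a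
  have hpq : Real.HolderConjugate (1 / a) (1 / (1 - a)) :=
    Real.holderConjugate_iff.2 ⟨by rw [lt_div_iff₀ ha₀]; linarith, by simp⟩
  have hgf' : ∀ z, g z ^ (1 / a) ≤ f z := fun z =>
    calc g z ^ (1 / a) ≤ (f z ^ a) ^ (1 / a) := ENNReal.rpow_le_rpow (hgf z) (by positivity)
      _ = f z := by rw [← ENNReal.rpow_mul, mul_one_div_cancel ha₀.ne', ENNReal.rpow_one]
  have hH := ENNReal.lintegral_mul_le_Lp_mul_Lq μ hpq hg.aemeasurable aemeasurable_const
    (g := fun _ => 1)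
  simp only [Pi.mul_apply, mul_one, ENNReal.one_rpow, lintegral_const, one_mul, one_div_one_div]
    at hH
  rw [hfg]
  exact hH.trans (by gcongr; exact hgf' _)

lemma lintegral_rpow_le_measure_rpow {m : Measure α} {f : α → ℝ≥0∞}
    [IsProbabilityMeasure (m.withDensity f)] {A : Set α} (hA : MeasurableSet A)
    (hfA : ∀ᵐ z ∂m.withDensity f, z ∈ A) {a : ℝ} (ha₀ : 0 < a) (ha₁ : a < 1) :
    ∫⁻ z, f z ^ a ∂m ≤ m A ^ (1 - a) := by
  have hAc : ∫⁻ z in Aᶜ, f z ∂m = 0 := by rw [← withDensity_apply _ hA.compl]; exact ae_iff.1 hfA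
  have hA₁ : ∫⁻ z in A, f z ∂m ≤ 1 := by rw [← withDensity_apply _ hA]; exact prob_le_one
  calc ∫⁻ z, f z ^ a ∂m = ∫⁻ z in A, f z ^ a ∂m + ∫⁻ z in Aᶜ, f z ^ a ∂m := by
        rw [← lintegral_add_measure, Measure.restrict_add_restrict_compl hA]
    _ ≤ (∫⁻ z in A, f z ∂m) ^ a * m A ^ (1 - a) + (∫⁻ z in Aᶜ, f z ∂m) ^ a * m Aᶜ ^ (1 - a) := by
        gcongr <;> rw [← Measure.restrict_apply_univ] <;>
          exact lintegral_rpow_le_lintegral_rpow_mul_measure_univ _ _ ha₀ ha₁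
    _ ≤ m A ^ (1 - a) := by
        rw [hAc, ENNReal.zero_rpow_of_pos ha₀, zero_mul, add_zero]
        exact mul_le_of_le_one_left' (ENNReal.rpow_le_one hA₁ ha₀.le)

lemma isProbabilityMeasure_withDensity_indicator (m : Measure α) {S : Set α}
    (hS : MeasurableSet S) (h₀ : m S ≠ 0) (h : m S ≠ ∞) :
    IsProbabilityMeasure (m.withDensity (S.indicator fun _ => (m S)⁻¹)) := by
  constructor
  rw [withDensity_apply _ MeasurableSet.univ, Measure.restrict_univ, lintegral_indicator hS,
    setLIntegral_const, ENNReal.inv_mul_cancel h₀ h]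

lemma ae_mem_withDensity_indicator (m : Measure α) {S : Set α} (hS : MeasurableSet S)
    (f : α → ℝ≥0∞) : ∀ᵐ z ∂m.withDensity (S.indicator f), z ∈ S := by
  rw [withDensity_indicator hS]
  exact (withDensity_absolutelyContinuous _ _).ae_le (ae_restrict_mem hS)

end Lintegral

section Coupling

variable [MeasurableSpace X] {q : Measure (X × X)} {μ₀ μ₁ : Measure X}

lemma IsCoupling.ae_fst (hq : IsCoupling q μ₀ μ₁) {P : X → Prop} (h : ∀ᵐ z ∂μ₀, P z) :
    ∀ᵐ p ∂q, P p.1 :=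
  ae_of_ae_map measurable_fst.aemeasurable (hq.2.1 ▸ h)

lemma IsCoupling.ae_snd (hq : IsCoupling q μ₀ μ₁) {P : X → Prop} (h : ∀ᵐ z ∂μ₁, P z) :
    ∀ᵐ p ∂q, P p.2 :=
  ae_of_ae_map measurable_snd.aemeasurable (hq.2.2 ▸ h)

lemma IsCoupling.lintegral_fst (hq : IsCoupling q μ₀ μ₁) {g : X → ℝ≥0∞} (hg : Measurable g) :
    ∫⁻ p, g p.1 ∂q = ∫⁻ z, g z ∂μ₀ := by
  rw [← hq.2.1, lintegral_map hg measurable_fst]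

lemma IsCoupling.lintegral_snd (hq : IsCoupling q μ₀ μ₁) {g : X → ℝ≥0∞} (hg : Measurable g) :
    ∫⁻ p, g p.2 ∂q = ∫⁻ z, g z ∂μ₁ := by
  rw [← hq.2.2, lintegral_map hg measurable_snd]

lemma isCoupling_prod [IsProbabilityMeasure μ₀] [IsProbabilityMeasure μ₁] :
    IsCoupling (μ₀.prod μ₁) μ₀ μ₁ :=
  ⟨inferInstance, by simp, by simp⟩

lemma le_mul_W2sq_add {ρ : X → X → ℝ} {Y a C : ℝ≥0∞} (ha₀ : a ≠ 0) (ha : a ≠ ∞)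
    (h : ∀ q, IsCoupling q μ₀ μ₁ → Y ≤ a * cost ρ q + C) : Y ≤ a * W2sq ρ μ₀ μ₁ + C := by
  simp only [W2sq, ENNReal.mul_iInf_of_ne ha₀ ha, ENNReal.iInf_add]
  exact le_iInf₂ h

end Coupling

section Metric

variable {M : Type*} [MetricSpace M] [MeasurableSpace M]

lemma lintegral_dist_sq_le_of_ae_dist_le {μ : Measure M} [IsProbabilityMeasure μ] {x : M} {R : ℝ}
    (h : ∀ᵐ z ∂μ, dist x z ≤ R) : ∫⁻ z, ENNReal.ofReal (dist x z ^ 2) ∂μ ≤ ENNReal.ofReal (R ^ 2) :=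
  (lintegral_mono_ae (h.mono fun z hz => ENNReal.ofReal_le_ofReal
    (pow_le_pow_left₀ dist_nonneg hz 2))).trans_eq (by simp)

lemma memP2_withDensity_indicator (m : Measure M) {S : Set M} (hS : MeasurableSet S)
    (hSb : Bornology.IsBounded S) (h₀ : m S ≠ 0) (h : m S ≠ ∞) :
    memP2 dist m (m.withDensity (S.indicator fun _ => (m S)⁻¹)) := by
  have := isProbabilityMeasure_withDensity_indicator m hS h₀ h
  obtain ⟨x₀, -⟩ := nonempty_of_measure_ne_zero h₀
  obtain ⟨R, hR⟩ := (Metric.isBounded_iff_subset_closedBall x₀).1 hSb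
  refine ⟨this, withDensity_absolutelyContinuous _ _, x₀, ?_⟩
  exact (lintegral_dist_sq_le_of_ae_dist_le ((ae_mem_withDensity_indicator m hS _).mono
    fun z hz => Metric.mem_closedBall'.1 (hR hz))).trans_lt ENNReal.ofReal_lt_top

variable [BorelSpace M]

lemma W2sq_eq_lintegral_of_ae_eq {μ₀ ν : Measure M} [IsProbabilityMeasure μ₀]
    [IsProbabilityMeasure ν] {x : M} (hx : ∀ᵐ z ∂μ₀, z = x) :
    W2sq dist μ₀ ν = ∫⁻ z, ENNReal.ofReal (dist x z ^ 2) ∂ν := by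
  have hg : Measurable fun z => ENNReal.ofReal (dist x z ^ 2) := by fun_prop
  have hcost : ∀ q, IsCoupling q μ₀ ν → cost dist q = ∫⁻ z, ENNReal.ofReal (dist x z ^ 2) ∂ν :=
    fun q hq => by
      rw [cost, ← hq.lintegral_snd hg]
      exact lintegral_congr_ae ((hq.ae_fst hx).mono fun p hp => by simp only [hp])
  refine le_antisymm ?_ (le_iInf₂ fun q hq => (hcost q hq).ge)
  exact (iInf₂_le (f := fun q (_ : IsCoupling q μ₀ ν) => cost dist q) _ isCoupling_prod).trans_eq
    (hcost _ isCoupling_prod)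

lemma lintegral_infDist_sq_add_le {μ ν : Measure M} {q : Measure (M × M)}
    (hq : IsCoupling q μ ν) {x : M} {t R₁ R₂ : ℝ} (ht₀ : 0 ≤ t) (ht₁ : t ≤ 1)
    (hν : ∀ᵐ z ∂ν, dist x z ∈ Icc R₁ R₂) :
    ∫⁻ z, ENNReal.ofReal (Metric.infDist (dist x z) (Icc (t * R₁) (t * R₂)) ^ 2) ∂μ +
        ENNReal.ofReal (t * (1 - t)) * ∫⁻ z, ENNReal.ofReal (dist x z ^ 2) ∂ν ≤
      ENNReal.ofReal t * cost dist q +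
        ENNReal.ofReal (1 - t) * ∫⁻ z, ENNReal.ofReal (dist x z ^ 2) ∂μ := by
  have hpoint : ∀ p : M × M, dist x p.2 ∈ Icc R₁ R₂ →
      Metric.infDist (dist x p.1) (Icc (t * R₁) (t * R₂)) ^ 2 + t * (1 - t) * dist x p.2 ^ 2 ≤
        t * dist p.1 p.2 ^ 2 + (1 - t) * dist x p.1 ^ 2 := by
    rintro ⟨z, w⟩ ⟨hw₁, hw₂⟩
    have hmem : t * dist x w ∈ Icc (t * R₁) (t * R₂) :=
      ⟨mul_le_mul_of_nonneg_left hw₁ ht₀, mul_le_mul_of_nonneg_left hw₂ ht₀⟩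
    have hinf : Metric.infDist (dist x z) (Icc (t * R₁) (t * R₂)) ≤ |dist x z - t * dist x w| :=
      Metric.infDist_le_dist_of_mem hmem
    have hdiff : |dist x w - dist x z| ≤ dist z w := by
      simpa only [dist_comm x, dist_comm w z] using abs_dist_sub_le w z x
    -- `(u - t v)² + t (1 - t) v² = t (v - u)² + (1 - t) u²` for `u = dist x z`, `v = dist x w`
    nlinarith [sq_abs (dist x z - t * dist x w), sq_abs (dist x w - dist x z),
      pow_le_pow_left₀ Metric.infDist_nonneg hinf 2, pow_le_pow_left₀ (abs_nonneg _) hdiff 2]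
  have hsq : Measurable fun z : M => ENNReal.ofReal (dist x z ^ 2) := by fun_prop
  have hinf : Measurable fun z : M =>
      ENNReal.ofReal (Metric.infDist (dist x z) (Icc (t * R₁) (t * R₂)) ^ 2) :=
    ((Metric.continuous_infDist_pt _).measurable.comp (by fun_prop)).pow_const 2 |>.ennreal_ofReal
  calc _ = ∫⁻ p, (ENNReal.ofReal (Metric.infDist (dist x p.1) (Icc (t * R₁) (t * R₂)) ^ 2) +
          ENNReal.ofReal (t * (1 - t)) * ENNReal.ofReal (dist x p.2 ^ 2)) ∂q := by
        rw [← hq.lintegral_fst hinf, ← hq.lintegral_snd hsq,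
          ← lintegral_const_mul' _ _ ENNReal.ofReal_ne_top]
        exact (lintegral_add_left (hinf.comp measurable_fst) _).symm
    _ ≤ ∫⁻ p, (ENNReal.ofReal t * ENNReal.ofReal (dist p.1 p.2 ^ 2) +
          ENNReal.ofReal (1 - t) * ENNReal.ofReal (dist x p.1 ^ 2)) ∂q := by
        refine lintegral_mono_ae ((hq.ae_snd hν).mono fun p hp => ?_)
        have h₁ : 0 ≤ 1 - t := by linarith
        rw [← ENNReal.ofReal_mul (by positivity), ← ENNReal.ofReal_mul ht₀,
          ← ENNReal.ofReal_mul h₁, ← ENNReal.ofReal_add (by positivity) (by positivity),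
          ← ENNReal.ofReal_add (by positivity) (by positivity)]
        exact ENNReal.ofReal_le_ofReal (hpoint p hp)
    _ = _ := by
        rw [cost, ← hq.lintegral_fst hsq, ← lintegral_const_mul' _ _ ENNReal.ofReal_ne_top,
          ← lintegral_const_mul' _ _ ENNReal.ofReal_ne_top]
        exact lintegral_add_right _ ((hsq.comp measurable_fst).const_mul _)

lemma ae_dist_mem_Icc_of_W2sq_le {μ ν : Measure M} [IsProbabilityMeasure ν] {x : M}
    {t R₁ R₂ : ℝ} {W : ℝ≥0∞} (ht₀ : 0 < t) (ht₁ : t ≤ 1) (hW : W ≠ ∞)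
    (hν : ∀ᵐ z ∂ν, dist x z ∈ Icc R₁ R₂)
    (hμW : ∫⁻ z, ENNReal.ofReal (dist x z ^ 2) ∂μ = ENNReal.ofReal (t ^ 2) * W)
    (hνW : ∫⁻ z, ENNReal.ofReal (dist x z ^ 2) ∂ν = W)
    (hμν : W2sq dist μ ν ≤ ENNReal.ofReal ((1 - t) ^ 2) * W) :
    ∀ᵐ z ∂μ, dist x z ∈ Icc (t * R₁) (t * R₂) := by
  set I := Icc (t * R₁) (t * R₂)
  have h₁ : 0 ≤ 1 - t := by linarith
  have hbound : ∫⁻ z, ENNReal.ofReal (Metric.infDist (dist x z) I ^ 2) ∂μ +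
      ENNReal.ofReal (t * (1 - t)) * W ≤ 0 + ENNReal.ofReal (t * (1 - t)) * W := by
    calc _ ≤ ENNReal.ofReal t * W2sq dist μ ν +
          ENNReal.ofReal (1 - t) * (ENNReal.ofReal (t ^ 2) * W) := by
          rw [← hμW, ← hνW]
          exact le_mul_W2sq_add (by simpa using ht₀) ENNReal.ofReal_ne_top
            fun q hq => lintegral_infDist_sq_add_le hq ht₀.le ht₁ hν
      _ ≤ ENNReal.ofReal t * (ENNReal.ofReal ((1 - t) ^ 2) * W) +
          ENNReal.ofReal (1 - t) * (ENNReal.ofReal (t ^ 2) * W) := by gcongr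
      _ = 0 + ENNReal.ofReal (t * (1 - t)) * W := by
          rw [zero_add, ← mul_assoc, ← mul_assoc, ← add_mul, ← ENNReal.ofReal_mul ht₀.le,
            ← ENNReal.ofReal_mul h₁, ← ENNReal.ofReal_add (by positivity) (by positivity)]
          congr 2
          ring
  have hzero := ENNReal.le_of_add_le_add_right (ENNReal.mul_ne_top ENNReal.ofReal_ne_top hW) hbound
  have hmeas : Measurable fun z => ENNReal.ofReal (Metric.infDist (dist x z) I ^ 2) :=
    ((Metric.continuous_infDist_pt _).measurable.comp (by fun_prop)).pow_const 2 |>.ennreal_ofReal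
  obtain ⟨w, hw⟩ := hν.exists
  have hI : I.Nonempty :=
    ⟨t * dist x w, mul_le_mul_of_nonneg_left hw.1 ht₀.le, mul_le_mul_of_nonneg_left hw.2 ht₀.le⟩
  filter_upwards [(lintegral_eq_zero_iff hmeas).1 (nonpos_iff_eq_zero.1 hzero)] with z hz
  rw [isClosed_Icc.mem_iff_infDist_zero hI]
  simpa using hz

lemma ae_dist_mem_Icc_of_W2sq_eq {μ : ℝ → Measure M}
    (hμ : ∀ t ∈ Icc (0 : ℝ) 1, IsProbabilityMeasure (μ t)) {x : M} {R₁ R₂ : ℝ}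
    (h₀ : ∀ᵐ z ∂μ 0, z = x) (h₁ : ∀ᵐ z ∂μ 1, dist x z ∈ Icc R₁ R₂)
    (hgeo : ∀ s ∈ Icc (0 : ℝ) 1, ∀ t ∈ Icc (0 : ℝ) 1,
      W2sq dist (μ s) (μ t) = ENNReal.ofReal ((s - t) ^ 2) * W2sq dist (μ 0) (μ 1)) :
    ∀ t ∈ Ioc (0 : ℝ) 1, ∀ᵐ z ∂μ t, dist x z ∈ Icc (t * R₁) (t * R₂) := by
  intro t ht
  have h0I : (0 : ℝ) ∈ Icc (0 : ℝ) 1 := ⟨le_rfl, zero_le_one⟩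
  have h1I : (1 : ℝ) ∈ Icc (0 : ℝ) 1 := ⟨zero_le_one, le_rfl⟩
  have htI : t ∈ Icc (0 : ℝ) 1 := Ioc_subset_Icc_self ht
  have := hμ 0 h0I
  have := hμ 1 h1I
  have := hμ t htI
  have hW := W2sq_eq_lintegral_of_ae_eq (ν := μ 1) h₀
  refine ae_dist_mem_Icc_of_W2sq_le ht.1 ht.2 ?_ h₁ ?_ hW.symm ?_
  · rw [hW]
    exact ((lintegral_dist_sq_le_of_ae_dist_le (h₁.mono fun z hz => hz.2)).trans_lt
      ENNReal.ofReal_lt_top).ne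
  · rw [← W2sq_eq_lintegral_of_ae_eq h₀, hgeo 0 h0I t htI, zero_sub, neg_sq]
  · rw [hgeo t htI 1 h1I, ← neg_sub, neg_sq]

lemma exists_subset_annulus (m : Measure M) [IsLocallyFiniteMeasure m] [m.IsOpenPosMeasure]
    [Nontrivial M] (x : M) :
    ∃ B : Set M, ∃ R₁ R₂ : ℝ, MeasurableSet B ∧ Bornology.IsBounded B ∧ m B ≠ 0 ∧ m B ≠ ∞ ∧
      0 < R₁ ∧ ∀ z ∈ B, dist x z ∈ Icc R₁ R₂ := by
  obtain ⟨y, hy⟩ := exists_ne x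
  obtain ⟨U, hU, hUfin⟩ := m.finiteAt_nhds y
  obtain ⟨r, hr, hrU⟩ := Metric.mem_nhds_iff.1 hU
  have hD : 0 < dist x y := dist_pos.2 hy.symm
  set ε := min r (dist x y / 2)
  have hε : 0 < ε := lt_min hr (by positivity)
  refine ⟨Metric.ball y ε, dist x y - ε, dist x y + ε, measurableSet_ball, Metric.isBounded_ball,
    (Metric.measure_ball_pos m y hε).ne', ?_, ?_, fun z hz => ⟨?_, ?_⟩⟩
  · exact ((measure_mono ((Metric.ball_subset_ball (min_le_left _ _)).trans hrU)).trans_lt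
      hUfin).ne
  · linarith [min_le_right r (dist x y / 2)]
  · linarith [dist_triangle x z y, Metric.mem_ball.1 hz]
  · linarith [dist_triangle x y z, Metric.mem_ball'.1 hz]

lemma tendsto_measure_punctured_closedBall (m : Measure M) [IsLocallyFiniteMeasure m] (x : M) :
    Tendsto (fun r => m {z | dist x z ∈ Ioc 0 r}) (𝓝[>] 0) (𝓝 0) := by
  obtain ⟨U, hU, hUfin⟩ := m.finiteAt_nhds x
  obtain ⟨r, hr, hrU⟩ := Metric.mem_nhds_iff.1 hU
  have hd : Measurable fun z => dist x z := by fun_prop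
  have h := tendsto_measure_biInter_gt (μ := m) (a := 0) (s := fun r => {z | dist x z ∈ Ioc 0 r})
    (fun r _ => (hd measurableSet_Ioc).nullMeasurableSet)
    (fun i j _ hij z hz => ⟨hz.1, hz.2.trans hij⟩)
    ⟨r / 2, by positivity, ((measure_mono fun z hz => hrU (Metric.mem_ball'.2 (by
      linarith [hz.2]))).trans_lt hUfin).ne⟩
  have hempty : ⋂ r > (0 : ℝ), {z | dist x z ∈ Ioc 0 r} = ∅ :=
    eq_empty_of_forall_notMem fun z hz => by
      have hz₀ := (mem_iInter₂.1 hz 1 one_pos).1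
      linarith [(mem_iInter₂.1 hz _ (half_pos hz₀)).2]
  rwa [hempty, measure_empty] at h

end Metric

section Distortion

lemma mul_sin_le_sin_mul {a s : ℝ} (ha₀ : 0 ≤ a) (ha : a ≤ Real.pi) (hs₀ : 0 ≤ s) (hs₁ : s ≤ 1) :
    s * Real.sin a ≤ Real.sin (s * a) := by
  have h := strictConcaveOn_sin_Icc.concaveOn.2 ⟨ha₀, ha⟩ ⟨le_rfl, Real.pi_pos.le⟩ hs₀
    (sub_nonneg.2 hs₁) (add_sub_cancel s 1)
  simpa only [smul_eq_mul, Real.sin_zero, mul_zero, add_zero] using h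

lemma mul_mul_le_rpow_mul_rpow {N s b r : ℝ} (hN : 1 ≤ N) (hs₀ : 0 < s) (hs₁ : s ≤ 1)
    (hb₀ : 0 < b) (hb₁ : b ≤ 1) (hr : s * b ≤ r) : s * (s * b) ≤ s ^ (1 / N) * r ^ (1 - 1 / N) := by
  have hN' : 1 / N ≤ 1 := (div_le_one (by linarith)).2 hN
  have hsb : 0 < s * b := mul_pos hs₀ hb₀
  gcongr
  · simpa using Real.rpow_le_rpow_of_exponent_ge hs₀ hs₁ hN'
  · calc s * b = (s * b) ^ (1 : ℝ) := (Real.rpow_one _).symm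
      _ ≤ (s * b) ^ (1 - 1 / N) :=
        Real.rpow_le_rpow_of_exponent_ge hsb (mul_le_one₀ hs₁ hb₀.le hb₁)
          (by linarith [one_div_pos.2 (by linarith : 0 < N)])
      _ ≤ r ^ (1 - 1 / N) := Real.rpow_le_rpow hsb.le hr (by linarith)

lemma exists_pos_forall_ofReal_le_tau (K : ℝ) {N R₁ R₂ : ℝ} (hN : 1 < N) (hR₁ : 0 < R₁)
    (hR : R₁ ≤ R₂) :
    ∃ c > 0, ∀ s ∈ Icc (1 / 2 : ℝ) 1, ∀ θ ∈ Icc R₁ R₂, ENNReal.ofReal c ≤ tau K N s θ := by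
  suffices ∃ b > 0, ∀ s ∈ Icc (1 / 2 : ℝ) 1, ∀ θ ∈ Icc R₁ R₂,
      ENNReal.ofReal (s * (s * b)) ≤ tau K N s θ by
    obtain ⟨b, hb₀, hb⟩ := this
    refine ⟨b / 4, by positivity, fun s hs θ hθ =>
      (ENNReal.ofReal_le_ofReal ?_).trans (hb s hs θ hθ)⟩
    have hs2 : 1 / 4 ≤ s * s := by nlinarith [hs.1]
    nlinarith
  have hN₀ : 0 < N - 1 := by linarith
  rcases lt_trichotomy K 0 with hK | rfl | hK
  · set l := Real.sqrt (-K / (N - 1))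
    have hl : 0 < l := Real.sqrt_pos.2 (div_pos (by linarith) hN₀)
    have hsinh₂ : 0 < Real.sinh (l * R₂) := Real.sinh_pos_iff.2 (by nlinarith)
    refine ⟨min 1 (l * R₁ / Real.sinh (l * R₂)), lt_min one_pos (by positivity),
      fun s hs θ hθ => ?_⟩
    have hs₀ : 0 < s := by linarith [hs.1]
    have hθ₀ : 0 < θ := hR₁.trans_le hθ.1
    rw [tau, if_neg (by simp [hK.ne, hθ₀.ne']), if_neg hK.not_gt]
    refine ENNReal.ofReal_le_ofReal (mul_mul_le_rpow_mul_rpow hN.le hs₀ hs.2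
      (lt_min one_pos (by positivity)) (min_le_left _ _) ?_)
    have hnum : s * (l * R₁) ≤ Real.sinh (l * (s * θ)) :=
      calc s * (l * R₁) ≤ l * (s * θ) := by
            nlinarith [mul_le_mul_of_nonneg_left hθ.1 (mul_pos hl hs₀).le]
        _ ≤ _ := Real.self_le_sinh_iff.2 (by positivity)
    have hden : Real.sinh (l * θ) ≤ Real.sinh (l * R₂) := Real.sinh_le_sinh.2 (by nlinarith [hθ.2])
    calc s * min 1 (l * R₁ / Real.sinh (l * R₂)) ≤ s * (l * R₁) / Real.sinh (l * R₂) := by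
          rw [mul_div_assoc s]; exact mul_le_mul_of_nonneg_left (min_le_right _ _) hs₀.le
      _ ≤ _ := div_le_div₀ (by positivity) hnum (Real.sinh_pos_iff.2 (by positivity)) hden
  · refine ⟨1, one_pos, fun s hs θ _ => ?_⟩
    rw [tau, if_pos (Or.inl rfl)]
    exact ENNReal.ofReal_le_ofReal (by nlinarith [hs.1, hs.2])
  · set l := Real.sqrt (K / (N - 1))
    have hl : 0 < l := Real.sqrt_pos.2 (div_pos hK hN₀)
    refine ⟨1, one_pos, fun s hs θ hθ => ?_⟩
    have hs₀ : 0 < s := by linarith [hs.1]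
    have hθ₀ : 0 < θ := hR₁.trans_le hθ.1
    rw [tau, if_neg (by simp [hK.ne', hθ₀.ne']), if_pos hK, if_neg hN.ne']
    split_ifs with hθπ
    · refine ENNReal.ofReal_le_ofReal (mul_mul_le_rpow_mul_rpow hN.le hs₀ hs.2 one_pos le_rfl ?_)
      have hinv : l * Real.sqrt ((N - 1) / K) = 1 := by
        rw [← Real.sqrt_mul (div_pos hK hN₀).le, div_mul_div_comm, mul_comm K,
          div_self (mul_pos hN₀ hK).ne', Real.sqrt_one]
      have hlθ : l * θ < Real.pi :=
        calc l * θ < l * (Real.sqrt ((N - 1) / K) * Real.pi) := mul_lt_mul_of_pos_left hθπ hl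
          _ = Real.pi := by rw [← mul_assoc, hinv, one_mul]
      have hsin : 0 < Real.sin (l * θ) := Real.sin_pos_of_pos_of_lt_pi (by positivity) hlθ
      rw [mul_one, le_div_iff₀ hsin, ← mul_assoc, mul_comm l s, mul_assoc]
      exact mul_sin_le_sin_mul (by positivity) hlθ.le hs₀.le hs.2
    · exact le_top

end Distortion

section CurvatureDimension

variable {M : Type*} [MetricSpace M] [MeasurableSpace M]

lemma ofReal_mul_rpow_le_lintegral_tau {μ₀ μ₁ : Measure M} {q : Measure (M × M)}
    (hq : IsCoupling q μ₀ μ₁) {x : M} {R₁ R₂ : ℝ} (h₀ : ∀ᵐ z ∂μ₀, z = x)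
    (h₁ : ∀ᵐ z ∂μ₁, dist x z ∈ Icc R₁ R₂) {K N s t c : ℝ}
    (hτ : ∀ θ ∈ Icc R₁ R₂, ENNReal.ofReal c ≤ tau K N s θ) (g₀ g₁ : M → ℝ≥0∞) :
    ENNReal.ofReal c * g₀ x ^ (-(1 / N)) ≤
      ∫⁻ p, tau K N s (dist p.1 p.2) * g₀ p.1 ^ (-(1 / N)) +
        tau K N t (dist p.1 p.2) * g₁ p.2 ^ (-(1 / N)) ∂q := by
  have := hq.1
  calc ENNReal.ofReal c * g₀ x ^ (-(1 / N)) = ∫⁻ _, ENNReal.ofReal c * g₀ x ^ (-(1 / N)) ∂q := by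
        simp
    _ ≤ _ := lintegral_mono_ae <| by
        filter_upwards [hq.ae_fst h₀, hq.ae_snd h₁] with p hp₁ hp₂
        rw [hp₁]
        exact le_add_right (mul_le_mul_left (hτ _ hp₂) _)

variable [BorelSpace M]

theorem CD.exists_pos_le_measure_annulus {m : Measure M} {K N : ℝ} (hCD : CD dist m K N)
    {x : M} (hx₀ : m {x} ≠ 0) (hx : m {x} ≠ ∞) {B : Set M} (hBm : MeasurableSet B)
    (hBb : Bornology.IsBounded B) (hB₀ : m B ≠ 0) (hB : m B ≠ ∞) {R₁ R₂ : ℝ} (hR₁ : 0 < R₁)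
    (hBx : ∀ z ∈ B, dist x z ∈ Icc R₁ R₂) :
    ∃ ε > 0, ∀ t ∈ Ioc (0 : ℝ) (1 / 2), ε ≤ m {z | dist x z ∈ Icc (t * R₁) (t * R₂)} := by
  obtain ⟨y, hy⟩ := nonempty_of_measure_ne_zero hB₀
  set f₀ := ({x} : Set M).indicator fun _ => (m {x})⁻¹
  obtain ⟨q, f, hq, hf₀, hf₁, hP2, hgeo, hent⟩ := hCD f₀ _
    (memP2_withDensity_indicator m (measurableSet_singleton x) Bornology.isBounded_singleton hx₀ hx)
    (memP2_withDensity_indicator m hBm hBb hB₀ hB)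
  have hδ : ∀ᵐ z ∂m.withDensity f₀, z = x :=
    ae_mem_withDensity_indicator m (measurableSet_singleton x) _
  have hB1 := (ae_mem_withDensity_indicator m hBm fun _ => (m B)⁻¹).mono hBx
  have hconc := ae_dist_mem_Icc_of_W2sq_eq (μ := fun t => m.withDensity (f t))
    (fun t ht => (hP2 t ht).1) (by rwa [hf₀]) (by rwa [hf₁]) (by simpa only [hf₀, hf₁] using hgeo)
  set N' := max N 2
  have hN' : 1 < N' := by linarith [le_max_right N 2]
  obtain ⟨c, hc, hτ⟩ := exists_pos_forall_ofReal_le_tau K hN' hR₁ ((hBx y hy).1.trans (hBx y hy).2)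
  refine ⟨ENNReal.ofReal c ^ N' * m {x}, ENNReal.mul_pos (by positivity) hx₀, fun t ht => ?_⟩
  have := (hP2 t ⟨ht.1.le, by linarith [ht.2]⟩).1
  have hA : MeasurableSet {z | dist x z ∈ Icc (t * R₁) (t * R₂)} :=
    (show Measurable fun z => dist x z by fun_prop) measurableSet_Icc
  have hmass : ENNReal.ofReal c * m {x} ^ (1 / N') ≤
      m {z | dist x z ∈ Icc (t * R₁) (t * R₂)} ^ (1 / N') :=
    calc ENNReal.ofReal c * m {x} ^ (1 / N') = ENNReal.ofReal c * f₀ x ^ (-(1 / N')) := by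
          rw [show f₀ x = (m {x})⁻¹ from indicator_of_mem (mem_singleton x) _, ENNReal.inv_rpow,
            ENNReal.rpow_neg, inv_inv]
      _ ≤ _ := ofReal_mul_rpow_le_lintegral_tau hq.1 hδ hB1
          (hτ (1 - t) ⟨by linarith [ht.2], by linarith [ht.1]⟩) _ _
      _ ≤ ∫⁻ z, f t z ^ (1 - 1 / N') ∂m :=
          hent t ⟨ht.1, by linarith [ht.2]⟩ N' (le_max_left N 2)
      _ ≤ m {z | dist x z ∈ Icc (t * R₁) (t * R₂)} ^ (1 - (1 - 1 / N')) :=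
          lintegral_rpow_le_measure_rpow hA (hconc t ⟨ht.1, by linarith [ht.2]⟩)
            (sub_pos.2 ((div_lt_one (by positivity)).2 hN')) (by simp; positivity)
      _ = _ := by rw [sub_sub_cancel]
  rwa [← ENNReal.rpow_le_rpow_iff (by positivity : 0 < 1 / N'),
    ENNReal.mul_rpow_of_nonneg _ _ (by positivity), ← ENNReal.rpow_mul,
    mul_one_div_cancel (by positivity), ENNReal.rpow_one]

theorem CD.exists_pos_le_measure_punctured_closedBall [Nontrivial M] {m : Measure M}
    [IsLocallyFiniteMeasure m] [m.IsOpenPosMeasure] {K N : ℝ} (hCD : CD dist m K N) {x : M}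
    (hx₀ : m {x} ≠ 0) : ∃ ρ > 0, ∃ ε > 0, ∀ r ∈ Ioc 0 ρ, ε ≤ m {z | dist x z ∈ Ioc 0 r} := by
  obtain ⟨B, R₁, R₂, hBm, hBb, hB₀, hB, hR₁, hBx⟩ := exists_subset_annulus m x
  obtain ⟨y, hy⟩ := nonempty_of_measure_ne_zero hB₀
  have hR₂ : 0 < R₂ := hR₁.trans_le ((hBx y hy).1.trans (hBx y hy).2)
  obtain ⟨ε, hε, hmass⟩ := hCD.exists_pos_le_measure_annulus hx₀
    isCompact_singleton.measure_lt_top.ne hBm hBb hB₀ hB hR₁ hBx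
  refine ⟨R₂ / 2, half_pos hR₂, ε, hε, fun r hr => ?_⟩
  have ht : r / R₂ ∈ Ioc (0 : ℝ) (1 / 2) :=
    ⟨div_pos hr.1 hR₂, (div_le_iff₀ hR₂).2 (by linarith [hr.2])⟩
  exact (hmass _ ht).trans (measure_mono fun z hz =>
    ⟨(mul_pos ht.1 hR₁).trans_le hz.1, hz.2.trans_eq (div_mul_cancel₀ r hR₂.ne')⟩)

end CurvatureDimension

theorem statement14_general
    {M : Type*} [MetricSpace M]
    [Nontrivial M] [MeasurableSpace M] [BorelSpace M]
    (m : Measure M) [IsLocallyFiniteMeasure m] [m.IsOpenPosMeasure]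
    (K N : ℝ) (hCD : CD dist m K N) :
    ∀ x : M, m {x} = 0 := by
  intro x
  by_contra hx
  obtain ⟨ρ, hρ, ε, hε, hmass⟩ := hCD.exists_pos_le_measure_punctured_closedBall hx
  obtain ⟨r, hrε, hr⟩ := (((tendsto_measure_punctured_closedBall m x).eventually
    (gt_mem_nhds hε)).and (Ioc_mem_nhdsGT hρ)).exists
  exact (hmass r hr).not_gt hrε

/-- If `(M,d,m)` satisfies the curvature-dimension condition `CD(K,N)`
for some `K ∈ ℝ` and `N ∈ [1,∞)`, then `m` has no atoms. -/
theorem statement14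
    {M : Type*} [MetricSpace M] [CompleteSpace M] [TopologicalSpace.SeparableSpace M]
    [Nontrivial M] [MeasurableSpace M] [BorelSpace M]
    (m : Measure M) [IsLocallyFiniteMeasure m] [m.IsOpenPosMeasure]
    (K N : ℝ) (hN : 1 ≤ N) (hCD : CD dist m K N) :
    ∀ x : M, m {x} = 0 :=
  statement14_general m K N hCD

end PaperCD
end
end
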